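/- For every p ∈ (2,∞) and every T₀ > 0, one has lim_{t→∞} (t − T₀)^{1/2 − 1/p}·‖Θ(t,·) − Θ(t − T₀,·)‖_{Lᵖ(ℝ²)} = 0. -/

import Mathlib

open Real MeasureTheory Filter
open scoped Topology ENNReal NNReal

noncomputable section

/-- The perpendicular vector `x⊥ = (x₂, -x₁)`. -/
def perp (x : EuclideanSpace ℝ (Fin 2)) : EuclideanSpace ℝ (Fin 2) :=
  (WithLp.equiv 2 (Fin 2 → ℝ)).symm ![x 1, -(x 0)]

/-- The Lamb–Oseen vortex `Θ(t,x) = x⊥/(2π|x|²) · (1 - exp(-|x|²/(4t)))`, with value `0`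
at `x = 0` (automatic here, since in Lean `0/0 = 0` and `perp 0 = 0`). -/
def lambOseen (t : ℝ) (x : EuclideanSpace ℝ (Fin 2)) : EuclideanSpace ℝ (Fin 2) :=
  ((1 - Real.exp (-‖x‖ ^ 2 / (4 * t))) / (2 * π * ‖x‖ ^ 2)) • perp x

/-!
Since `(1 - e^{-r²/(4t)}) / (2πr²)` is the radial profile of `Θ(t,·)`, convexity of `exp` gives the
pointwise bound `|Θ(t,x) - Θ(s,x)| ≤ (t - s) / (8π s t) · |x| e^{-|x|²/(4t)}` for `0 < s ≤ t`.
By parabolic scaling, the `Lᵖ` norm of `|x| e^{-|x|²/(4t)}` is `t^{1/2 + 1/p}` times that of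
`|x| e^{-|x|²/4}`, which is finite since it is dominated by a Gaussian. Hence
`(t - T₀)^{1/2 - 1/p} ‖Θ(t) - Θ(t - T₀)‖_p ≤ C T₀ / (t - T₀)`, which tends to `0`.
-/

section Dilation

variable {E F : Type*} [NormedAddCommGroup E] [NormedSpace ℝ E] [MeasurableSpace E] [BorelSpace E]
  [FiniteDimensional ℝ E] (μ : Measure E) [μ.IsAddHaarMeasure] [NormedAddCommGroup F]

theorem eLpNorm_comp_smul {f : E → F} (hf : AEStronglyMeasurable f μ) {p : ℝ≥0∞} (hp : p ≠ ∞)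
    {c : ℝ} (hc : c ≠ 0) :
    eLpNorm (fun x => f (c • x)) p μ
      = ENNReal.ofReal |(c ^ Module.finrank ℝ E)⁻¹| ^ (1 / p.toReal) * eLpNorm f p μ := by
  have hmap := Measure.map_addHaar_smul μ hc
  change eLpNorm (f ∘ fun x => c • x) p μ = _
  rw [← eLpNorm_map_measure (g := f) (by rw [hmap]; exact hf.smul_measure _)
      (measurable_const_smul c).aemeasurable, hmap, eLpNorm_smul_measure_of_ne_top hp,
    smul_eq_mul, one_div, ENNReal.toReal_inv, one_div]

end Dilation

section Gaussian

variable {V : Type*} [NormedAddCommGroup V] [InnerProductSpace ℝ V] [FiniteDimensional ℝ V]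
  [MeasurableSpace V] [BorelSpace V]

theorem integrable_exp_neg_mul_sq_norm {b : ℝ} (hb : 0 < b) :
    Integrable (fun v : V => exp (-b * ‖v‖ ^ 2)) := by
  refine (GaussianFourier.integrable_cexp_neg_mul_sq_norm_add (V := V) (b := b)
    (by simpa using hb) 0 0).norm.congr (.of_forall fun v => ?_)
  simp [Complex.norm_exp, ← Complex.ofReal_pow, ← Complex.ofReal_neg, ← Complex.ofReal_mul]

theorem memLp_exp_neg_mul_sq_norm {b : ℝ} (hb : 0 < b) {p : ℝ≥0∞} (hp0 : p ≠ 0) (hp : p ≠ ∞) :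
    MemLp (fun v : V => exp (-b * ‖v‖ ^ 2)) p := by
  have hcont : Continuous fun v : V => exp (-b * ‖v‖ ^ 2) := by fun_prop
  rw [← integrable_norm_rpow_iff hcont.aestronglyMeasurable hp0 hp]
  refine (integrable_exp_neg_mul_sq_norm (V := V) (b := b * p.toReal)
    (mul_pos hb (ENNReal.toReal_pos hp0 hp))).congr (.of_forall fun v => ?_)
  dsimp only
  rw [Real.norm_of_nonneg (exp_nonneg _), ← exp_mul]
  ring_nf

theorem mul_exp_neg_sq_div_eight_le_two (r : ℝ) : r * exp (-r ^ 2 / 8) ≤ 2 := by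
  rw [neg_div, exp_neg, ← div_eq_mul_inv, div_le_iff₀ (exp_pos _)]
  nlinarith [add_one_le_exp (r ^ 2 / 8), sq_nonneg (r - 2)]

theorem memLp_norm_mul_exp_neg_sq_norm_div_four {p : ℝ≥0∞} (hp0 : p ≠ 0) (hp : p ≠ ∞) :
    MemLp (fun v : V => ‖v‖ * exp (-‖v‖ ^ 2 / 4)) p := by
  refine ((memLp_exp_neg_mul_sq_norm (V := V) (b := 1 / 8) (by norm_num) hp0 hp).const_mul 2).of_le
    (by fun_prop : Continuous fun v : V => ‖v‖ * exp (-‖v‖ ^ 2 / 4)).aestronglyMeasurable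
    (.of_forall fun v => ?_)
  have hsplit : exp (-‖v‖ ^ 2 / 4) = exp (-‖v‖ ^ 2 / 8) * exp (-(1 / 8) * ‖v‖ ^ 2) := by
    rw [← exp_add]; ring_nf
  rw [Real.norm_of_nonneg (by positivity), Real.norm_of_nonneg (by positivity), hsplit, ← mul_assoc]
  gcongr
  exact mul_exp_neg_sq_div_eight_le_two ‖v‖

theorem eLpNorm_norm_mul_exp_neg_sq_norm_div {p : ℝ≥0∞} (hp : p ≠ ∞) {t : ℝ} (ht : 0 < t) :
    eLpNorm (fun x : V => ‖x‖ * exp (-‖x‖ ^ 2 / (4 * t))) p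
      = ENNReal.ofReal √t * ENNReal.ofReal (√t ^ Module.finrank ℝ V) ^ (1 / p.toReal)
          * eLpNorm (fun x : V => ‖x‖ * exp (-‖x‖ ^ 2 / 4)) p := by
  have hsqrt : 0 < √t := sqrt_pos.2 ht
  have hdil : (fun x : V => ‖x‖ * exp (-‖x‖ ^ 2 / (4 * t)))
      = √t • fun x : V => ‖(√t)⁻¹ • x‖ * exp (-‖(√t)⁻¹ • x‖ ^ 2 / 4) := by
    ext x
    rw [Pi.smul_apply, smul_eq_mul, norm_smul, Real.norm_of_nonneg (inv_nonneg.2 hsqrt.le),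
      mul_pow, inv_pow, sq_sqrt ht.le]
    field_simp
  rw [hdil, eLpNorm_const_smul,
    eLpNorm_comp_smul volume (f := fun x : V => ‖x‖ * exp (-‖x‖ ^ 2 / 4)) (by fun_prop) hp
      (inv_ne_zero hsqrt.ne'),
    inv_pow, inv_inv, abs_of_pos (by positivity), Real.enorm_of_nonneg hsqrt.le, mul_assoc]

end Gaussian

theorem Real.exp_sub_exp_le (x y : ℝ) : exp x - exp y ≤ exp x * (x - y) := by
  have h : exp y = exp x * exp (y - x) := by rw [← exp_add, add_sub_cancel]
  nlinarith [add_one_le_exp (y - x), exp_pos x]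

theorem norm_perp (x : EuclideanSpace ℝ (Fin 2)) : ‖perp x‖ = ‖x‖ := by
  simp only [EuclideanSpace.norm_eq, perp, WithLp.equiv_symm_apply,
    Fin.sum_univ_two, Matrix.cons_val_zero, Matrix.cons_val_one, Real.norm_eq_abs, sq_abs]
  ring_nf

theorem lambOseen_sub_lambOseen (s t : ℝ) (x : EuclideanSpace ℝ (Fin 2)) :
    lambOseen t x - lambOseen s x
      = ((exp (-‖x‖ ^ 2 / (4 * s)) - exp (-‖x‖ ^ 2 / (4 * t))) / (2 * π * ‖x‖ ^ 2)) • perp x := by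
  rw [lambOseen, lambOseen, ← sub_smul]
  ring_nf

theorem norm_lambOseen_sub_le {s t : ℝ} (hs : 0 < s) (hst : s ≤ t) (x : EuclideanSpace ℝ (Fin 2)) :
    ‖lambOseen t x - lambOseen s x‖
      ≤ (t - s) / (8 * π * s * t) * (‖x‖ * exp (-‖x‖ ^ 2 / (4 * t))) := by
  have ht : 0 < t := hs.trans_le hst
  rcases eq_or_ne x 0 with rfl | hx
  · simp [lambOseen_sub_lambOseen]
  have hu : 0 < ‖x‖ ^ 2 := by positivity
  have hmono : exp (-‖x‖ ^ 2 / (4 * s)) ≤ exp (-‖x‖ ^ 2 / (4 * t)) := by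
    rw [exp_le_exp, neg_div, neg_div, neg_le_neg_iff]
    gcongr
  have hgap : exp (-‖x‖ ^ 2 / (4 * t)) - exp (-‖x‖ ^ 2 / (4 * s))
      ≤ exp (-‖x‖ ^ 2 / (4 * t)) * (‖x‖ ^ 2 * (t - s) / (4 * s * t)) := by
    refine (Real.exp_sub_exp_le _ _).trans_eq ?_
    field_simp
    ring
  rw [lambOseen_sub_lambOseen, norm_smul, norm_perp, Real.norm_eq_abs, ← neg_sub, div_eq_mul_inv,
    neg_mul, abs_neg, abs_mul, abs_of_nonneg (sub_nonneg.2 hmono), abs_of_pos (by positivity)]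
  calc (exp (-‖x‖ ^ 2 / (4 * t)) - exp (-‖x‖ ^ 2 / (4 * s))) * (2 * π * ‖x‖ ^ 2)⁻¹ * ‖x‖
      ≤ exp (-‖x‖ ^ 2 / (4 * t)) * (‖x‖ ^ 2 * (t - s) / (4 * s * t))
          * (2 * π * ‖x‖ ^ 2)⁻¹ * ‖x‖ := by gcongr
    _ = (t - s) / (8 * π * s * t) * (‖x‖ * exp (-‖x‖ ^ 2 / (4 * t))) := by
      field_simp
      ring

theorem eLpNorm_lambOseen_sub_le {p : ℝ} (hp : 0 < p) {s t : ℝ} (hs : 0 < s) (hst : s ≤ t) :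
    (eLpNorm (fun x => lambOseen t x - lambOseen s x) (ENNReal.ofReal p) volume).toReal
      ≤ (t - s) / (8 * π * s) * t ^ (1 / p - 1 / 2)
          * (eLpNorm (fun x : EuclideanSpace ℝ (Fin 2) => ‖x‖ * exp (-‖x‖ ^ 2 / 4))
              (ENNReal.ofReal p) volume).toReal := by
  have ht : 0 < t := hs.trans_le hst
  set q := ENNReal.ofReal p
  set g := fun x : EuclideanSpace ℝ (Fin 2) => ‖x‖ * exp (-‖x‖ ^ 2 / (4 * t))
  set K := (eLpNorm (fun x : EuclideanSpace ℝ (Fin 2) => ‖x‖ * exp (-‖x‖ ^ 2 / 4)) q volume).toReal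
  set c := (t - s) / (8 * π * s * t)
  have hc : 0 ≤ c := div_nonneg (sub_nonneg.2 hst) (by positivity)
  have hq0 : q ≠ 0 := by simpa [q] using hp
  have hg := eLpNorm_norm_mul_exp_neg_sq_norm_div (V := EuclideanSpace ℝ (Fin 2)) (p := q)
    ENNReal.ofReal_ne_top ht
  rw [finrank_euclideanSpace_fin, sq_sqrt ht.le, ENNReal.toReal_ofReal hp.le] at hg
  have hg_ne_top : eLpNorm g q ≠ ∞ := by
    rw [hg]
    exact ENNReal.mul_ne_top (ENNReal.mul_ne_top ENNReal.ofReal_ne_top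
      (ENNReal.rpow_ne_top_of_nonneg (by positivity) ENNReal.ofReal_ne_top))
      (memLp_norm_mul_exp_neg_sq_norm_div_four hq0 ENNReal.ofReal_ne_top).eLpNorm_ne_top
  calc (eLpNorm (fun x => lambOseen t x - lambOseen s x) q volume).toReal
      ≤ (eLpNorm (c • g) q volume).toReal := by
        refine ENNReal.toReal_mono ?_ (eLpNorm_mono_real (norm_lambOseen_sub_le hs hst))
        rw [eLpNorm_const_smul]
        exact ENNReal.mul_ne_top enorm_ne_top hg_ne_top
    _ = c * (√t * t ^ (1 / p) * K) := by
        rw [eLpNorm_const_smul, hg, ENNReal.toReal_mul, ENNReal.toReal_mul, ENNReal.toReal_mul,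
          ← ENNReal.toReal_rpow, toReal_enorm, Real.norm_of_nonneg hc,
          ENNReal.toReal_ofReal (sqrt_nonneg t), ENNReal.toReal_ofReal ht.le]
    _ = _ := by
        have hpow : t ^ (1 / 2 : ℝ) * t ^ (1 / p) = t ^ (1 / p - 1 / 2) * t := by
          rw [← rpow_add ht, ← rpow_add_one ht.ne']
          ring_nf
        rw [sqrt_eq_rpow, hpow]
        simp only [c]
        field_simp

theorem rpow_mul_eLpNorm_lambOseen_sub_le {p : ℝ} (hp : 2 ≤ p) {T₀ t : ℝ} (hT₀ : 0 ≤ T₀)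
    (ht : T₀ < t) :
    (t - T₀) ^ ((1 : ℝ) / 2 - 1 / p)
        * (eLpNorm (fun x => lambOseen t x - lambOseen (t - T₀) x) (ENNReal.ofReal p) volume).toReal
      ≤ T₀ * (eLpNorm (fun x : EuclideanSpace ℝ (Fin 2) => ‖x‖ * exp (-‖x‖ ^ 2 / 4))
          (ENNReal.ofReal p) volume).toReal / (8 * π) * (t - T₀)⁻¹ := by
  have hα : 0 ≤ 1 / 2 - 1 / p := by
    rw [sub_nonneg]
    gcongr
  have ht0 : 0 < t := hT₀.trans_lt ht
  have hdecay := eLpNorm_lambOseen_sub_le (p := p) (by linarith) (sub_pos.2 ht) (sub_le_self t hT₀)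
  rw [sub_sub_cancel] at hdecay
  have hcancel : t ^ (1 / 2 - 1 / p) * t ^ (1 / p - 1 / 2) = 1 := by
    rw [← rpow_add ht0, sub_add_sub_cancel', sub_self, rpow_zero]
  refine (mul_le_mul (rpow_le_rpow (sub_pos.2 ht).le (sub_le_self t hT₀) hα) hdecay
    ENNReal.toReal_nonneg (by positivity)).trans_eq ?_
  rw [mul_comm (T₀ / _), mul_assoc, ← mul_assoc (t ^ _), hcancel]
  field_simp

/-- for `p ∈ (2,∞)` and `T₀ > 0`,
`lim_{t→∞} (t-T₀)^{1/2-1/p} ‖Θ(t,·) - Θ(t-T₀,·)‖_{Lᵖ(ℝ²)} = 0`. -/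
theorem lambOseen_time_shift_decay (p : ℝ) (hp : 2 < p) (T₀ : ℝ) (hT₀ : 0 < T₀) :
    Tendsto (fun t : ℝ => (t - T₀) ^ ((1 : ℝ) / 2 - 1 / p)
        * (eLpNorm (fun x : EuclideanSpace ℝ (Fin 2) => lambOseen t x - lambOseen (t - T₀) x)
            (ENNReal.ofReal p) volume).toReal)
      atTop (𝓝 0) := by
  set K := (eLpNorm (fun x : EuclideanSpace ℝ (Fin 2) => ‖x‖ * exp (-‖x‖ ^ 2 / 4))
    (ENNReal.ofReal p) volume).toReal
  have hlim : Tendsto (fun t : ℝ => T₀ * K / (8 * π) * (t - T₀)⁻¹) atTop (𝓝 0) := by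
    simpa [sub_eq_add_neg] using (tendsto_inv_atTop_zero.comp
      (tendsto_atTop_add_const_right _ (-T₀) tendsto_id)).const_mul (T₀ * K / (8 * π))
  refine tendsto_of_tendsto_of_tendsto_of_le_of_le' tendsto_const_nhds hlim ?_ ?_
  · filter_upwards [eventually_gt_atTop T₀] with t ht
    exact mul_nonneg (rpow_nonneg (sub_pos.2 ht).le _) ENNReal.toReal_nonneg
  · filter_upwards [eventually_gt_atTop T₀] with t ht
    exact rpow_mul_eLpNorm_lambOseen_sub_le hp.le hT₀.le ht
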